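/- If x = (x¹,…,xᵏ) is a local solution of the unconstrained MSSC problem, then for every j such that the attraction set A[xʲ] is nonempty, xʲ equals the barycenter of A[xʲ], i.e., xʲ = (1/|I(j)|)∑_{i∈I(j)} aⁱ where I(j) = {i : aⁱ ∈ A[xʲ]}. -/

import Mathlib

/-!
Moving the single center `xʲ` to a point `z` raises the objective by at most
`(1/m) ∑_{i ∈ I(j)} (‖aⁱ - z‖² - ‖aⁱ - xʲ‖²)`: a point of `A[xʲ]` is charged at most `‖aⁱ - z‖²`,
and every other point keeps a center strictly closer than `xʲ`, which does not move.
Hence `xʲ` is a local minimizer of `z ↦ ∑_{i ∈ I(j)} ‖aⁱ - z‖²`, whose gradient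
`2 ∑_{i ∈ I(j)} (z - aⁱ)` vanishes only at the barycenter.
-/

/-- The objective of the unconstrained MSSC problem. -/
noncomputable def msscF {n m k : ℕ} [NeZero k] (a : Fin m → EuclideanSpace ℝ (Fin n))
    (x : Fin k → EuclideanSpace ℝ (Fin n)) : ℝ :=
  (1 / (m : ℝ)) * ∑ i, (Finset.univ.inf' Finset.univ_nonempty fun j => ‖a i - x j‖ ^ 2)

/-- The index set `I(j)` of the attraction set `A[xʲ]`. -/
noncomputable def attrIdx {n m k : ℕ} [NeZero k] (a : Fin m → EuclideanSpace ℝ (Fin n))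
    (x : Fin k → EuclideanSpace ℝ (Fin n)) (j : Fin k) : Finset (Fin m) :=
  Finset.univ.filter fun i =>
    ‖a i - x j‖ = Finset.univ.inf' Finset.univ_nonempty fun q => ‖a i - x q‖

open Finset

section Barycenter

variable {ι E : Type*} [NormedAddCommGroup E] [InnerProductSpace ℝ E]

theorem hasFDerivAt_sum_norm_sub_sq (s : Finset ι) (a : ι → E) (y : E) :
    HasFDerivAt (fun z => ∑ i ∈ s, ‖a i - z‖ ^ 2)
      (-(2 : ℝ) • innerSL ℝ (∑ i ∈ s, (a i - y))) y := by
  refine (HasFDerivAt.fun_sum fun i _ =>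
    ((hasFDerivAt_id y).const_sub (a i)).norm_sq).congr_fderiv ?_
  ext v
  simp only [id_eq, map_sub, ContinuousLinearMap.comp_neg, ContinuousLinearMap.comp_id, neg_sub,
    _root_.sum_apply, smul_apply, sub_apply, coe_innerSL_apply, nsmul_eq_mul, Nat.cast_ofNat,
    ← mul_sum, sum_sub_distrib, sum_const, map_sum, map_nsmul, neg_smul, neg_apply, smul_eq_mul]
  ring

theorem eq_barycenter_of_isLocalMin_sum_norm_sub_sq {s : Finset ι} (hs : s.Nonempty)
    (a : ι → E) {y : E} (h : IsLocalMin (fun z => ∑ i ∈ s, ‖a i - z‖ ^ 2) y) :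
    y = (#s : ℝ)⁻¹ • ∑ i ∈ s, a i := by
  have hgrad := h.hasFDerivAt_eq_zero (hasFDerivAt_sum_norm_sub_sq s a y)
  rw [smul_eq_zero_iff_right (by norm_num), ← map_zero (innerSL ℝ), innerSL_inj,
    sum_sub_distrib, sum_const, sub_eq_zero, ← Nat.cast_smul_eq_nsmul ℝ] at hgrad
  have hcard : (#s : ℝ) ≠ 0 := by exact_mod_cast hs.card_pos.ne'
  rw [hgrad, inv_smul_smul₀ hcard]

end Barycenter

section NearestCenter

variable {ι E : Type*} [Fintype ι] [Nonempty ι] [NormedAddCommGroup E]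

noncomputable def sqDistToNearest (x : ι → E) (p : E) : ℝ :=
  univ.inf' univ_nonempty fun q => ‖p - x q‖ ^ 2

theorem sqDistToNearest_le (x : ι → E) (p : E) (q : ι) :
    sqDistToNearest x p ≤ ‖p - x q‖ ^ 2 :=
  inf'_le _ (mem_univ q)

theorem le_sqDistToNearest_iff {x : ι → E} {p : E} {r : ℝ} :
    r ≤ sqDistToNearest x p ↔ ∀ q, r ≤ ‖p - x q‖ ^ 2 := by
  simp [sqDistToNearest, le_inf'_iff]

theorem sqDistToNearest_eq_of_forall_le {x : ι → E} {p : E} {j : ι}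
    (h : ∀ q, ‖p - x j‖ ≤ ‖p - x q‖) : sqDistToNearest x p = ‖p - x j‖ ^ 2 :=
  (sqDistToNearest_le x p j).antisymm
    (le_sqDistToNearest_iff.2 fun q => pow_le_pow_left₀ (norm_nonneg _) (h q) 2)

variable [DecidableEq ι]

theorem sqDistToNearest_update_le (x : ι → E) (p : E) (j : ι) (z : E) :
    sqDistToNearest (Function.update x j z) p ≤ ‖p - z‖ ^ 2 := by
  simpa using sqDistToNearest_le (Function.update x j z) p j

theorem sqDistToNearest_update_le_of_lt {x : ι → E} {p : E} {j q₀ : ι}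
    (h : ‖p - x q₀‖ < ‖p - x j‖) (z : E) :
    sqDistToNearest (Function.update x j z) p ≤ sqDistToNearest x p := by
  have hq₀ : q₀ ≠ j := by rintro rfl; exact h.false
  refine le_sqDistToNearest_iff.2 fun q => ?_
  rcases eq_or_ne q j with rfl | hq
  · calc sqDistToNearest (Function.update x q z) p ≤ ‖p - x q₀‖ ^ 2 := by
          simpa [hq₀] using sqDistToNearest_le (Function.update x q z) p q₀
      _ ≤ ‖p - x q‖ ^ 2 := pow_le_pow_left₀ (norm_nonneg _) h.le 2
  · simpa [hq] using sqDistToNearest_le (Function.update x j z) p q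

end NearestCenter

section MSSC

variable {n m k : ℕ} [NeZero k] (a : Fin m → EuclideanSpace ℝ (Fin n))
  (x : Fin k → EuclideanSpace ℝ (Fin n))

theorem msscF_eq : msscF a x = (1 / (m : ℝ)) * ∑ i, sqDistToNearest x (a i) := rfl

theorem mem_attrIdx_iff {j : Fin k} {i : Fin m} :
    i ∈ attrIdx a x j ↔ ∀ q, ‖a i - x j‖ ≤ ‖a i - x q‖ := by
  simp only [attrIdx, mem_filter, mem_univ, true_and]
  exact ⟨fun h q => h ▸ inf'_le _ (mem_univ q),
    fun h => le_antisymm ((le_inf'_iff _ _).2 fun q _ => h q) (inf'_le _ (mem_univ j))⟩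

theorem msscF_update_le (j : Fin k) (z : EuclideanSpace ℝ (Fin n)) :
    msscF a (Function.update x j z) ≤
      msscF a x + (1 / (m : ℝ)) * ∑ i ∈ attrIdx a x j, (‖a i - z‖ ^ 2 - ‖a i - x j‖ ^ 2) := by
  have hterm : ∀ i, sqDistToNearest (Function.update x j z) (a i) ≤ sqDistToNearest x (a i) +
      if i ∈ attrIdx a x j then ‖a i - z‖ ^ 2 - ‖a i - x j‖ ^ 2 else 0 := by
    intro i
    split_ifs with hi
    · rw [sqDistToNearest_eq_of_forall_le ((mem_attrIdx_iff a x).1 hi)]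
      linarith [sqDistToNearest_update_le x (a i) j z]
    · obtain ⟨q₀, hq₀⟩ : ∃ q₀, ‖a i - x q₀‖ < ‖a i - x j‖ := by
        simpa [mem_attrIdx_iff] using hi
      simpa using sqDistToNearest_update_le_of_lt hq₀ z
  rw [msscF_eq, msscF_eq, ← mul_add, ← univ_inter (attrIdx a x j), ← sum_ite_mem,
    ← sum_add_distrib]
  gcongr with i
  exact hterm i

end MSSC

/-- If `x` is a local solution of the unconstrained MSSC problem, then every component
`xʲ` whose attraction set is nonempty equals the barycenter of its attraction set. -/
theorem stmt6 {n m k : ℕ} [NeZero k]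
    (a : Fin m → EuclideanSpace ℝ (Fin n))
    (x : Fin k → EuclideanSpace ℝ (Fin n))
    (hloc : IsLocalMin (msscF a) x) :
    ∀ j : Fin k, (attrIdx a x j).Nonempty →
      x j = ((attrIdx a x j).card : ℝ)⁻¹ • ∑ i ∈ attrIdx a x j, a i := by
  intro j hI
  have hm : (0 : ℝ) < 1 / (m : ℝ) := by
    obtain ⟨i, -⟩ := hI
    exact one_div_pos.2 (Nat.cast_pos.2 i.pos)
  have hupdate : IsLocalMin (fun z => msscF a (Function.update x j z)) (x j) :=
    (Function.update_eq_self j x ▸ hloc).comp_continuous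
      (continuous_const.update j continuous_id).continuousAt
  refine eq_barycenter_of_isLocalMin_sum_norm_sub_sq hI a ?_
  filter_upwards [hupdate] with z hz
  rw [Function.update_eq_self] at hz
  have hgain : 0 ≤ 1 / (m : ℝ) * ∑ i ∈ attrIdx a x j, (‖a i - z‖ ^ 2 - ‖a i - x j‖ ^ 2) := by
    linarith [msscF_update_le a x j z]
  rw [sum_sub_distrib] at hgain
  exact sub_nonneg.1 (nonneg_of_mul_nonneg_right hgain hm)
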